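/- Fix n ≥ 1, let R be a commutative ring, and let β₁,…,βₙ ∈ R. Work in R[z₁,…,zₙ]. For each index i set c(i,0) = zᵢ⁵, c(i,1) = (1+βᵢ) zᵢ⁴, c(i,2) = (1+βᵢ) zᵢ³. Then the sum, over all weakly increasing functions v : {0,…,n} → ℤ with v(0)=0, v(n)=3 and v(i)−v(i−1) ≤ 2 for all i, of the products ∏_{i=1}^{n} c(i, v(i)−v(i−1)), equals ∑_{(j,k), j≠k} (1+β_j)(1+β_k) z_j³ z_k⁴ ∏_{l∉{j,k}} z_l⁵ + ∑_{{i,j,k} a 3-element subset of {1,…,n}} (1+β_i)(1+β_j)(1+β_k) z_i⁴ z_j⁴ z_k⁴ ∏_{l∉{i,j,k}} z_l⁵. (This is the multidegree of the multi-image variety of congruences C₁,…,Cₙ of bidegrees (1,βᵢ).) -/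

import Mathlib

open MvPolynomial Finset

/-! The increments `v i − v (i−1)` of a gap sequence form a weak composition of `3` into `n`
parts, each at most `2`, and `v` is recovered from them as partial sums. Such a composition is
read off from its level sets at `1` and `2`: either it is `2 e_j + e_k` with `j ≠ k`, or
`e_i + e_j + e_k` for a `3`-subset `{i, j, k}`. The product `∏ᵢ c(i, dᵢ)` of the first kind is
the term indexed by `(j, k)`, and of the second kind the term indexed by `{i, j, k}`. -/

section GapSequences

variable {n : ℕ}

def increments (v : Fin (n + 1) → ℤ) (i : Fin n) : ℤ :=
  v i.succ - v i.castSucc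

def gapSequences (n : ℕ) (m k : ℤ) : Set (Fin (n + 1) → ℤ) :=
  {v | Monotone v ∧ v 0 = 0 ∧ v (Fin.last n) = k ∧ ∀ i : Fin n, v i.succ - v i.castSucc ≤ m}

def weakCompositions (ι : Type*) [Fintype ι] (m k : ℤ) : Set (ι → ℤ) :=
  {d | (∀ i, d i ∈ Set.Icc 0 m) ∧ ∑ i, d i = k}

lemma Fin.partialSum_last {M : Type*} [AddCommMonoid M] (d : Fin n → M) :
    Fin.partialSum d (Fin.last n) = ∑ i, d i := by
  rw [Fin.partialSum, Fin.val_last, List.take_of_length_le (by simp), List.sum_ofFn]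

lemma increments_partialSum (d : Fin n → ℤ) : increments (Fin.partialSum d) = d :=
  funext fun i => by rw [increments, ← neg_add_eq_sub, Fin.partialSum_right_neg]

lemma partialSum_increments {v : Fin (n + 1) → ℤ} (h0 : v 0 = 0) :
    Fin.partialSum (increments v) = v := by
  have h := Fin.partialSum_left_neg v
  simp only [h0, zero_vadd, neg_add_eq_sub] at h
  exact h

lemma monotone_iff_increments_nonneg {v : Fin (n + 1) → ℤ} :
    Monotone v ↔ ∀ i, 0 ≤ increments v i := by
  simp [Fin.monotone_iff_le_succ, increments]

theorem bijOn_increments_gapSequences (m k : ℤ) :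
    Set.BijOn increments (gapSequences n m k) (weakCompositions (Fin n) m k) := by
  refine ⟨?_, ?_, ?_⟩
  · rintro v ⟨hmono, h0, hlast, hstep⟩
    refine ⟨fun i => ⟨monotone_iff_increments_nonneg.1 hmono i, hstep i⟩, ?_⟩
    rw [← Fin.partialSum_last, partialSum_increments h0, hlast]
  · rintro v ⟨-, hv0, -⟩ w ⟨-, hw0, -⟩ h
    rw [← partialSum_increments hv0, ← partialSum_increments hw0, h]
  · rintro d ⟨hbounds, hsum⟩
    have hmono : Monotone (Fin.partialSum d) := by
      rw [monotone_iff_increments_nonneg, increments_partialSum]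
      exact fun i => (hbounds i).1
    refine ⟨Fin.partialSum d, ⟨hmono, Fin.partialSum_zero d, ?_, fun i => ?_⟩,
      increments_partialSum d⟩
    · rw [Fin.partialSum_last, hsum]
    · change increments _ i ≤ m
      rw [increments_partialSum]
      exact (hbounds i).2

theorem finsum_gapSequences {M : Type*} [AddCommMonoid M] (g : (Fin n → ℤ) → M) (m k : ℤ) :
    ∑ᶠ v ∈ gapSequences n m k, g (increments v) = ∑ᶠ d ∈ weakCompositions (Fin n) m k, g d :=
  finsum_mem_eq_of_bijOn increments (bijOn_increments_gapSequences m k) fun _ _ => rfl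

end GapSequences

section WeakCompositions

variable {ι : Type*}

section

variable [DecidableEq ι]

def compositionOfPair (p : ι × ι) (i : ι) : ℤ :=
  if i = p.1 then 2 else if i = p.2 then 1 else 0

def compositionOfSubset (s : Finset ι) (i : ι) : ℤ :=
  if i ∈ s then 1 else 0

def compositionOf : (ι × ι) ⊕ Finset ι → ι → ℤ :=
  Sum.elim compositionOfPair compositionOfSubset

lemma compositionOf_mem_Icc (x : (ι × ι) ⊕ Finset ι) (i : ι) :
    compositionOf x i ∈ Set.Icc 0 2 := by
  rcases x with p | s
  · simp only [compositionOf, Sum.elim_inl, compositionOfPair]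
    split_ifs <;> norm_num
  · simp only [compositionOf, Sum.elim_inr, compositionOfSubset]
    split_ifs <;> norm_num

end

variable [Fintype ι]

def level (d : ι → ℤ) (a : ℤ) : Finset ι :=
  univ.filter (d · = a)

lemma mem_level {d : ι → ℤ} {a : ℤ} {i : ι} : i ∈ level d a ↔ d i = a := by
  simp [level]

lemma eq_of_level_eq {d d' : ι → ℤ} (hd : ∀ i, d i ∈ Set.Icc 0 2)
    (hd' : ∀ i, d' i ∈ Set.Icc 0 2) (h1 : level d 1 = level d' 1)
    (h2 : level d 2 = level d' 2) : d = d' := by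
  funext i
  have e1 : d i = 1 ↔ d' i = 1 := by rw [← mem_level, ← mem_level, h1]
  have e2 : d i = 2 ↔ d' i = 2 := by rw [← mem_level, ← mem_level, h2]
  obtain ⟨_, _⟩ := hd i
  obtain ⟨_, _⟩ := hd' i
  omega

lemma sum_eq_card_level {d : ι → ℤ} (hd : ∀ i, d i ∈ Set.Icc 0 2) :
    ∑ i, d i = #(level d 1) + 2 * #(level d 2) := by
  have hsplit : ∀ i, d i = (if d i = 1 then 1 else 0) + 2 * (if d i = 2 then 1 else 0) := by
    intro i
    obtain ⟨_, _⟩ := hd i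
    split_ifs <;> omega
  rw [sum_congr rfl fun i _ => hsplit i, sum_add_distrib, ← mul_sum, sum_boole, sum_boole]
  rfl

variable [DecidableEq ι]

variable (ι) in
def pairsAndTriples : Finset ((ι × ι) ⊕ Finset ι) :=
  (univ.filter fun p : ι × ι => p.1 ≠ p.2).disjSum (univ.powersetCard 3)

lemma level_compositionOfPair_two (p : ι × ι) : level (compositionOfPair p) 2 = {p.1} := by
  ext i
  rw [mem_level, mem_singleton, compositionOfPair]
  split_ifs <;> simp_all

lemma level_compositionOfPair_one {p : ι × ι} (hp : p.1 ≠ p.2) :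
    level (compositionOfPair p) 1 = {p.2} := by
  ext i
  rw [mem_level, mem_singleton, compositionOfPair]
  split_ifs <;> simp_all

lemma level_compositionOfSubset_two (s : Finset ι) : level (compositionOfSubset s) 2 = ∅ := by
  ext i
  rw [mem_level, compositionOfSubset]
  split_ifs <;> simp

lemma level_compositionOfSubset_one (s : Finset ι) : level (compositionOfSubset s) 1 = s := by
  ext i
  rw [mem_level, compositionOfSubset]
  split_ifs <;> simp_all

lemma inl_mem_pairsAndTriples {p : ι × ι} : Sum.inl p ∈ pairsAndTriples ι ↔ p.1 ≠ p.2 := by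
  rw [pairsAndTriples, inl_mem_disjSum, mem_filter_univ]

lemma inr_mem_pairsAndTriples {s : Finset ι} : Sum.inr s ∈ pairsAndTriples ι ↔ #s = 3 := by
  rw [pairsAndTriples, inr_mem_disjSum, mem_powersetCard_univ]

theorem bijOn_compositionOf_pairsAndTriples :
    Set.BijOn compositionOf ↑(pairsAndTriples ι) (weakCompositions ι 2 3) := by
  refine ⟨?_, ?_, ?_⟩
  · intro x hx
    refine ⟨compositionOf_mem_Icc x, ?_⟩
    rw [sum_eq_card_level (compositionOf_mem_Icc x)]
    rcases x with p | s
    · rw [mem_coe, inl_mem_pairsAndTriples] at hx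
      simp only [compositionOf, Sum.elim_inl]
      rw [level_compositionOfPair_one hx, level_compositionOfPair_two]
      norm_num
    · rw [mem_coe, inr_mem_pairsAndTriples] at hx
      simp only [compositionOf, Sum.elim_inr]
      rw [level_compositionOfSubset_one, level_compositionOfSubset_two, hx]
      norm_num
  · rintro (p | s) hx (q | t) hy h <;>
      simp only [mem_coe, inl_mem_pairsAndTriples, inr_mem_pairsAndTriples] at hx hy <;>
      have h1 := congrArg (level · 1) h <;> have h2 := congrArg (level · 2) h <;>
      simp only [compositionOf, Sum.elim_inl, Sum.elim_inr] at h1 h2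
    · rw [level_compositionOfPair_one hx, level_compositionOfPair_one hy, singleton_inj] at h1
      rw [level_compositionOfPair_two, level_compositionOfPair_two, singleton_inj] at h2
      rw [Prod.ext h2 h1]
    · rw [level_compositionOfPair_two, level_compositionOfSubset_two] at h2
      exact absurd h2 (singleton_ne_empty _)
    · rw [level_compositionOfPair_two, level_compositionOfSubset_two] at h2
      exact absurd h2.symm (singleton_ne_empty _)
    · rw [level_compositionOfSubset_one, level_compositionOfSubset_one] at h1
      rw [h1]
  · rintro d ⟨hd, hsum⟩
    rw [sum_eq_card_level hd] at hsum
    obtain ⟨h2, h1⟩ | ⟨h2, h1⟩ :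
        #(level d 2) = 1 ∧ #(level d 1) = 1 ∨ #(level d 2) = 0 ∧ #(level d 1) = 3 := by
      omega
    · obtain ⟨j, hj⟩ := card_eq_one.1 h2
      obtain ⟨k, hk⟩ := card_eq_one.1 h1
      have hj2 : d j = 2 := mem_level.1 (by rw [hj]; exact mem_singleton_self j)
      have hk1 : d k = 1 := mem_level.1 (by rw [hk]; exact mem_singleton_self k)
      have hjk : j ≠ k := by
        rintro rfl
        omega
      refine ⟨Sum.inl (j, k), inl_mem_pairsAndTriples.2 hjk,
        eq_of_level_eq (compositionOf_mem_Icc _) hd ?_ ?_⟩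
      · rw [compositionOf, Sum.elim_inl, level_compositionOfPair_one hjk, hk]
      · rw [compositionOf, Sum.elim_inl, level_compositionOfPair_two, hj]
    · refine ⟨Sum.inr (level d 1), inr_mem_pairsAndTriples.2 h1,
        eq_of_level_eq (compositionOf_mem_Icc _) hd ?_ ?_⟩
      · rw [compositionOf, Sum.elim_inr, level_compositionOfSubset_one]
      · rw [compositionOf, Sum.elim_inr, level_compositionOfSubset_two, card_eq_zero.1 h2]

lemma prod_apply_eq_mul_prod_compl {M : Type*} [CommMonoid M] (f : ι → ℤ → M) {d : ι → ℤ}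
    (s : Finset ι) (hd : ∀ i ∉ s, d i = 0) :
    ∏ i, f i (d i) = (∏ i ∈ s, f i (d i)) * ∏ i ∈ sᶜ, f i 0 := by
  rw [← prod_mul_prod_compl s]
  congr 1
  exact prod_congr rfl fun i hi => by rw [hd i (mem_compl.1 hi)]

theorem finsum_weakCompositions_two_three {M : Type*} [CommSemiring M] (f : ι → ℤ → M) :
    ∑ᶠ d ∈ weakCompositions ι 2 3, ∏ i, f i (d i) =
      (∑ p ∈ univ.filter (fun p : ι × ι => p.1 ≠ p.2),
        f p.1 2 * f p.2 1 * ∏ i ∈ ({p.1, p.2} : Finset ι)ᶜ, f i 0)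
      + ∑ s ∈ univ.powersetCard 3, (∏ i ∈ s, f i 1) * ∏ i ∈ sᶜ, f i 0 := by
  rw [← finsum_mem_eq_of_bijOn compositionOf bijOn_compositionOf_pairsAndTriples
    fun _ _ => rfl, finsum_mem_coe_finset, pairsAndTriples, sum_disjSum]
  congr 1
  · refine sum_congr rfl fun p hp => ?_
    have hne : p.1 ≠ p.2 := (mem_filter_univ p).1 hp
    rw [prod_apply_eq_mul_prod_compl f {p.1, p.2}, prod_pair hne]
    · simp [compositionOf, compositionOfPair, hne.symm]
    · intro i hi
      simp only [mem_insert, mem_singleton, not_or] at hi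
      simp [compositionOf, compositionOfPair, hi.1, hi.2]
  · refine sum_congr rfl fun s _ => ?_
    rw [prod_apply_eq_mul_prod_compl f s]
    · congr 1
      exact prod_congr rfl fun i hi => by simp [compositionOf, compositionOfSubset, hi]
    · intro i hi
      simp [compositionOf, compositionOfSubset, hi]

end WeakCompositions

theorem multidegree_multi_image_general (n : ℕ)
    {R : Type*} [CommRing R] (β : Fin n → R)
    (c : Fin n → ℤ → MvPolynomial (Fin n) R)
    (hc0 : ∀ i, c i 0 = X i ^ 5)
    (hc1 : ∀ i, c i 1 = C (1 + β i) * X i ^ 4)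
    (hc2 : ∀ i, c i 2 = C (1 + β i) * X i ^ 3) :
    (∑ᶠ v ∈ {v : Fin (n + 1) → ℤ | Monotone v ∧ v 0 = 0 ∧ v (Fin.last n) = 3 ∧
        ∀ i : Fin n, v i.succ - v i.castSucc ≤ 2},
      ∏ i : Fin n, c i (v i.succ - v i.castSucc))
    = (∑ p ∈ Finset.univ.filter (fun p : Fin n × Fin n => p.1 ≠ p.2),
        C ((1 + β p.1) * (1 + β p.2)) * X p.1 ^ 3 * X p.2 ^ 4 *
          ∏ l ∈ ({p.1, p.2} : Finset (Fin n))ᶜ, X l ^ 5)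
      + (∑ s ∈ Finset.univ.powersetCard 3,
        (∏ i ∈ s, C (1 + β i) * X i ^ 4) * ∏ l ∈ sᶜ, X l ^ 5) := by
  refine (finsum_gapSequences (fun d => ∏ i, c i (d i)) 2 3).trans ?_
  rw [finsum_weakCompositions_two_three]
  simp only [hc0, hc1, hc2, map_mul]
  exact congrArg (· + _) (sum_congr rfl fun _ _ => by ring)

/-- The multidegree of the multi-image variety of congruences `C₁,…,Cₙ` of
bidegrees `(1, βᵢ)`: summing, over all gap sequences `v`, the products
`∏ᵢ c(i, v i − v (i-1))` where `c(i,0) = zᵢ⁵`, `c(i,1) = (1+βᵢ) zᵢ⁴`,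
`c(i,2) = (1+βᵢ) zᵢ³`, yields
`∑_{(j,k), j≠k} (1+β_j)(1+β_k) z_j³ z_k⁴ ∏_{l∉{j,k}} z_l⁵
 + ∑_{{i,j,k}} (1+β_i)(1+β_j)(1+β_k) z_i⁴ z_j⁴ z_k⁴ ∏_{l∉{i,j,k}} z_l⁵`. -/
theorem multidegree_multi_image (n : ℕ) (hn : 1 ≤ n)
    {R : Type*} [CommRing R] (β : Fin n → R)
    (c : Fin n → ℤ → MvPolynomial (Fin n) R)
    (hc0 : ∀ i, c i 0 = X i ^ 5)
    (hc1 : ∀ i, c i 1 = C (1 + β i) * X i ^ 4)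
    (hc2 : ∀ i, c i 2 = C (1 + β i) * X i ^ 3) :
    (∑ᶠ v ∈ {v : Fin (n + 1) → ℤ | Monotone v ∧ v 0 = 0 ∧ v (Fin.last n) = 3 ∧
        ∀ i : Fin n, v i.succ - v i.castSucc ≤ 2},
      ∏ i : Fin n, c i (v i.succ - v i.castSucc))
    = (∑ p ∈ Finset.univ.filter (fun p : Fin n × Fin n => p.1 ≠ p.2),
        C ((1 + β p.1) * (1 + β p.2)) * X p.1 ^ 3 * X p.2 ^ 4 *
          ∏ l ∈ ({p.1, p.2} : Finset (Fin n))ᶜ, X l ^ 5)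
      + (∑ s ∈ Finset.univ.powersetCard 3,
        (∏ i ∈ s, C (1 + β i) * X i ^ 4) * ∏ l ∈ sᶜ, X l ^ 5) :=
  multidegree_multi_image_general n β c hc0 hc1 hc2
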